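/- arXiv:2603.25717 — 3 statements merged into one kernel-verified Lean document; each statement's English description precedes it below -/
import Mathlib

section
/- For every real β > 0, ∑_{m₁=0}^∞ ∑_{m₂=m₁+1}^∞ β / ( (m₁+β) · m₂ · (m₂+β) ) = π²/6. -/
/-!
Truncating at `m₂ ≤ N`, the partial sum equals the triangle sum
`∑ 1 / ((j + β) k)` over `1 ≤ j, k ≤ N` with `j + k > N`: both sides satisfy the same
recursion in `N` (after partial fractions `β / (m (m + β)) = 1 / m - 1 / (m + β)`).
At `β = 0` the triangle sum is exactly `∑_{n ≤ N} 1 / n²`, and moving `β` changes it by at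
most `2 β H_N / (N + 1)`, which tends to `0` by Cesàro.
-/

open Finset Filter Topology

lemma harmonic_mono : Monotone harmonic :=
  monotone_nat_of_le_succ fun n => by
    rw [harmonic_succ]
    exact le_add_of_nonneg_right (by positivity)

lemma harmonic_cast_eq_sum (n : ℕ) : (harmonic n : ℝ) = ∑ i ∈ range n, ((i : ℝ) + 1)⁻¹ := by
  simp [harmonic]

lemma harmonic_sub_harmonic_le {i N : ℕ} (h : i ≤ N) :
    (harmonic N : ℝ) - harmonic i ≤ (N - i) / (i + 1) := by
  induction N, h using Nat.le_induction with
  | base => simp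
  | succ N hiN ih =>
    have hinv : ((N : ℝ) + 1)⁻¹ ≤ ((i : ℝ) + 1)⁻¹ := by gcongr
    push_cast [harmonic_succ]
    calc (harmonic N : ℝ) + ((N : ℝ) + 1)⁻¹ - harmonic i
        ≤ (N - i) / (i + 1) + ((i : ℝ) + 1)⁻¹ := by linarith
      _ = (N + 1 - i) / (i + 1) := by field_simp; ring

lemma tendsto_harmonic_div_add_one :
    Tendsto (fun n : ℕ => (harmonic n : ℝ) / (n + 1)) atTop (𝓝 0) := by
  have hcesaro : Tendsto (fun n : ℕ => (n : ℝ)⁻¹ * harmonic n) atTop (𝓝 0) := by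
    simpa [harmonic_cast_eq_sum] using (tendsto_one_div_add_atTop_nhds_zero_nat (𝕜 := ℝ)).cesaro
  refine squeeze_zero (fun n => by rw [harmonic_cast_eq_sum]; positivity) (fun n => ?_) hcesaro
  rcases n with _ | n
  · simp
  · rw [div_eq_inv_mul]
    gcongr
    · rw [harmonic_cast_eq_sum]; positivity
    · simp

lemma sum_range_comp_natCast_sub (f : ℝ → ℝ) (N : ℕ) :
    ∑ i ∈ range N, f (N - i) = ∑ i ∈ range N, f (i + 1) := by
  rw [← sum_range_reflect]
  refine sum_congr rfl fun i hi => ?_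
  have hi : i < N := mem_range.1 hi
  rw [Nat.cast_sub (by omega), Nat.cast_sub (by omega)]
  ring_nf

lemma hasSum_sigma_of_nonneg {α : Type*} {β : α → Type*} {f : (Σ a, β a) → ℝ} {s : ℝ}
    (hf : ∀ x, 0 ≤ f x) (hfib : ∀ a, Summable fun b => f ⟨a, b⟩)
    (h : HasSum (fun a => ∑' b, f ⟨a, b⟩) s) : HasSum f s := by
  have hsum : Summable f := (summable_sigma_of_nonneg hf).2 ⟨hfib, h.summable⟩
  rw [← h.tsum_eq, ← hsum.tsum_sigma' hfib]
  exact hsum.hasSum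

def sigmaFinEquivSubtypeLt : (Σ m : ℕ, Fin m) ≃ {p : ℕ × ℕ // p.1 + 1 ≤ p.2} where
  toFun x := ⟨(x.2, x.1), x.2.isLt⟩
  invFun p := ⟨p.1.2, p.1.1, p.2⟩
  left_inv _ := rfl
  right_inv _ := rfl

/-- With `j = N - i`, this is the sum of `1 / ((j + β) k)` over `1 ≤ j, k ≤ N` with `j + k > N`. -/
noncomputable def triangleSum (β : ℝ) (N : ℕ) : ℝ :=
  ∑ i ∈ range N, (harmonic N - harmonic i : ℝ) / (N - i + β)

lemma triangleSum_succ (β : ℝ) (N : ℕ) :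
    triangleSum β (N + 1) = triangleSum β N +
      (∑ i ∈ range N, (((N : ℝ) + 1)⁻¹ - ((i : ℝ) + 1)⁻¹) / (N - i + β) +
        harmonic (N + 1) / (N + 1 + β)) := by
  rw [triangleSum, triangleSum, sum_range_succ', ← add_assoc, ← sum_add_distrib]
  push_cast [harmonic_succ]
  congr 1
  · refine sum_congr rfl fun i _ => ?_
    rw [← add_div]
    ring_nf
  · simp

lemma triangleSum_zero (N : ℕ) : triangleSum 0 N = ∑ n ∈ range N, 1 / ((n : ℝ) + 1) ^ 2 := by
  induction N with
  | zero => simp [triangleSum]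
  | succ N ih =>
    have hcol : ∑ i ∈ range N, (((N : ℝ) + 1)⁻¹ - ((i : ℝ) + 1)⁻¹) / (N - i + 0) =
        -(((N : ℝ) + 1)⁻¹ * harmonic N) := by
      rw [harmonic_cast_eq_sum, mul_sum, ← sum_neg_distrib]
      refine sum_congr rfl fun i hi => ?_
      have hi : (i : ℝ) < N := by exact_mod_cast mem_range.1 hi
      have hNi : (N : ℝ) - i ≠ 0 := by linarith
      rw [add_zero]
      field_simp
      ring
    rw [triangleSum_succ, ih, hcol, sum_range_succ]
    push_cast [harmonic_succ]
    field_simp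
    ring

lemma triangleSum_le_triangleSum_zero {β : ℝ} (hβ : 0 ≤ β) (N : ℕ) :
    triangleSum β N ≤ triangleSum 0 N :=
  sum_le_sum fun i hi => by
    have hi : i < N := mem_range.1 hi
    have hiN : (i : ℝ) < N := by exact_mod_cast hi
    have hH : (harmonic i : ℝ) ≤ harmonic N := by exact_mod_cast harmonic_mono hi.le
    gcongr

lemma triangleSum_zero_sub_le {β : ℝ} (hβ : 0 ≤ β) (N : ℕ) :
    triangleSum 0 N - triangleSum β N ≤ 2 * β * (harmonic N / (N + 1)) := by
  have hterm : ∀ i ∈ range N,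
      (harmonic N - harmonic i : ℝ) / (N - i + 0) - (harmonic N - harmonic i) / (N - i + β) ≤
        β / (N + 1) * (((i : ℝ) + 1)⁻¹ + ((N : ℝ) - i)⁻¹) := by
    intro i hi
    have hi : i < N := mem_range.1 hi
    have hiN : (i : ℝ) < N := by exact_mod_cast hi
    have hHN := harmonic_sub_harmonic_le hi.le
    have hNi : (0 : ℝ) < N - i := by linarith
    calc (harmonic N - harmonic i : ℝ) / (N - i + 0) - (harmonic N - harmonic i) / (N - i + β)
        = (harmonic N - harmonic i) * β / ((N - i) * (N - i + β)) := by field_simp; ring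
      _ ≤ (N - i) / (i + 1) * β / ((N - i) * (N - i)) := by
          gcongr
          linarith
      _ = β / (N + 1) * (((i : ℝ) + 1)⁻¹ + ((N : ℝ) - i)⁻¹) := by field_simp; ring
  calc triangleSum 0 N - triangleSum β N
      = ∑ i ∈ range N, ((harmonic N - harmonic i : ℝ) / (N - i + 0) -
          (harmonic N - harmonic i) / (N - i + β)) := by
        rw [triangleSum, triangleSum, sum_sub_distrib]
    _ ≤ ∑ i ∈ range N, β / (N + 1) * (((i : ℝ) + 1)⁻¹ + ((N : ℝ) - i)⁻¹) := sum_le_sum hterm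
    _ = 2 * β * (harmonic N / (N + 1)) := by
        rw [← mul_sum, sum_add_distrib, sum_range_comp_natCast_sub (·⁻¹), ← harmonic_cast_eq_sum]
        ring

lemma tendsto_triangleSum {β : ℝ} (hβ : 0 ≤ β) :
    Tendsto (triangleSum β) atTop (𝓝 (Real.pi ^ 2 / 6)) := by
  have hzero : Tendsto (triangleSum 0) atTop (𝓝 (Real.pi ^ 2 / 6)) := by
    rw [funext triangleSum_zero]
    simpa using ((hasSum_nat_add_iff' 1).2 hasSum_zeta_two).tendsto_sum_nat
  have hlower : Tendsto (fun N => triangleSum 0 N - 2 * β * (harmonic N / (N + 1))) atTop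
      (𝓝 (Real.pi ^ 2 / 6)) := by
    simpa using hzero.sub (tendsto_harmonic_div_add_one.const_mul (2 * β))
  exact tendsto_of_tendsto_of_tendsto_of_le_of_le hlower hzero
    (fun N => by linarith [triangleSum_zero_sub_le hβ N]) (triangleSum_le_triangleSum_zero hβ)

noncomputable def hurwitzSummand (β : ℝ) (a m : ℕ) : ℝ := β / ((a + β) * m * (m + β))

lemma hurwitzSummand_nonneg {β : ℝ} (hβ : 0 ≤ β) (a m : ℕ) : 0 ≤ hurwitzSummand β a m :=
  div_nonneg hβ (by positivity)

lemma sum_range_hurwitzSummand_succ {β : ℝ} (hβ : 0 < β) (N : ℕ) :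
    ∑ a ∈ range (N + 1), hurwitzSummand β a (N + 1) =
      ∑ i ∈ range N, (((N : ℝ) + 1)⁻¹ - ((i : ℝ) + 1)⁻¹) / (N - i + β) +
        harmonic (N + 1) / (N + 1 + β) := by
  have hreflect : ∑ i ∈ range N, hurwitzSummand β (i + 1) (N + 1) =
      ∑ i ∈ range N, β / ((N - i + β) * (N + 1) * (N + 1 + β)) := by
    simpa [hurwitzSummand] using
      (sum_range_comp_natCast_sub (fun x => β / ((x + β) * (N + 1) * (N + 1 + β))) N).symm
  rw [sum_range_succ', hreflect]
  push_cast [harmonic_succ]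
  rw [harmonic_cast_eq_sum, add_div, sum_div, ← add_assoc, ← sum_add_distrib]
  congr 1
  · refine sum_congr rfl fun i hi => ?_
    have hi : (i : ℝ) < N := by exact_mod_cast mem_range.1 hi
    have hNi : (N : ℝ) - i + β ≠ 0 := by linarith
    field_simp
    ring
  · simp only [hurwitzSummand, Nat.cast_zero, zero_add]
    push_cast
    field_simp

lemma sum_range_sum_range_hurwitzSummand {β : ℝ} (hβ : 0 < β) (N : ℕ) :
    ∑ m ∈ range (N + 1), ∑ a ∈ range m, hurwitzSummand β a m = triangleSum β N := by
  induction N with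
  | zero => simp [triangleSum]
  | succ N ih => rw [sum_range_succ, ih, sum_range_hurwitzSummand_succ hβ, triangleSum_succ]

lemma hasSum_sum_range_hurwitzSummand {β : ℝ} (hβ : 0 < β) :
    HasSum (fun m => ∑ a ∈ range m, hurwitzSummand β a m) (Real.pi ^ 2 / 6) := by
  refine (hasSum_iff_tendsto_nat_of_nonneg
    (fun m => sum_nonneg fun a _ => hurwitzSummand_nonneg hβ.le a m) _).2 ?_
  refine (tendsto_add_atTop_iff_nat 1).1 ?_
  simpa only [sum_range_sum_range_hurwitzSummand hβ] using tendsto_triangleSum hβ.le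

/-- Depth-two Hurwitz-type identity:
∑_{m₁ ≥ 0} ∑_{m₂ ≥ m₁+1} β/((m₁+β) m₂ (m₂+β)) = π²/6 for every β > 0. -/
theorem depth_two_hurwitz (β : ℝ) (hβ : 0 < β) :
    (∑' p : {p : ℕ × ℕ // p.1 + 1 ≤ p.2},
      β / (((p.1.1 : ℝ) + β) * (p.1.2 : ℝ) * ((p.1.2 : ℝ) + β)))
    = Real.pi ^ 2 / 6 := by
  have hcol (m : ℕ) : ∑ a : Fin m, hurwitzSummand β a m = ∑ a ∈ range m, hurwitzSummand β a m :=
    Fin.sum_univ_eq_sum_range (hurwitzSummand β · m) m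
  have hsigma : HasSum (fun x : Σ m : ℕ, Fin m => hurwitzSummand β x.2 x.1) (Real.pi ^ 2 / 6) :=
    hasSum_sigma_of_nonneg (fun x => hurwitzSummand_nonneg hβ.le _ _) (fun _ => .of_finite) (by
      simpa only [tsum_fintype, hcol] using hasSum_sum_range_hurwitzSummand hβ)
  exact (sigmaFinEquivSubtypeLt.hasSum_iff
    (f := fun p : {p : ℕ × ℕ // p.1 + 1 ≤ p.2} => hurwitzSummand β p.1.1 p.1.2)).1 hsigma |>.tsum_eq
end

section
/- For all integers N and m with 1 ≤ m ≤ N, ∑_{s=0}^{N-m} [ binom(N, s+m) / binom(N+s+m, s+m) ] · (m/(s+m)) · (-1)^s · binom(2m, m) · binom(2m−1+s, 2m−1) = 1. -/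
/-!
Wilf–Zeilberger method. Write `T N s` for the summand and set
`G N s = -s (s + m) (s + N + m + 1) / (2 (N - m + 1) (N + 1)²) · T (N + 1) s`.
Comparing the closed factorial forms of `T N s`, `T (N + 1) s` and `T (N + 1) (s + 1)` gives
`T (N + 1) s - T N s = G N (s + 1) - G N s` for `s + m ≤ N`. Summing over `s` telescopes, and the
one extra term `T (N + 1) (N - m + 1)` of the longer sum is exactly `-G N (N - m + 1)`; so the sum
does not depend on `N`, and at `N = m` it is the single term `1`.
-/

open Nat Finset

def binomTerm (N m s : ℕ) : ℚ :=
  ((N.choose (s + m) : ℚ) / ((N + s + m).choose (s + m) : ℚ)) *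
    ((m : ℚ) / ((s : ℚ) + (m : ℚ))) * (-1 : ℚ) ^ s *
    (((2 * m).choose m : ℚ)) * (((2 * m - 1 + s).choose (2 * m - 1) : ℚ))

def binomCert (N m s : ℕ) : ℚ :=
  -((s : ℚ) * (s + m) * (s + N + m + 1)) / (2 * ((N : ℚ) - m + 1) * ((N : ℚ) + 1) ^ 2) *
    binomTerm (N + 1) m s

lemma binomTerm_eq_factorial {N m s : ℕ} (hm : 1 ≤ m) (h : s + m ≤ N) :
    binomTerm N m s = (-1) ^ s * (2 * m ^ 2 / (m ! : ℚ) ^ 2) *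
      ((N ! : ℚ) ^ 2 * (2 * m - 1 + s)! /
        ((N - (s + m))! * (N + s + m)! * ((s : ℚ) + m) * s !)) := by
  have h2m : (2 * m)! = 2 * m * (2 * m - 1)! := by
    rw [← Nat.mul_factorial_pred (by omega : 2 * m ≠ 0)]
  rw [binomTerm, Nat.cast_choose ℚ h, Nat.cast_choose ℚ (by omega : s + m ≤ N + s + m),
    Nat.cast_choose ℚ (by omega : m ≤ 2 * m),
    Nat.cast_choose ℚ (by omega : 2 * m - 1 ≤ 2 * m - 1 + s),
    show N + s + m - (s + m) = N by omega, show 2 * m - m = m by omega,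
    show 2 * m - 1 + s - (2 * m - 1) = s by omega, h2m]
  have : (s : ℚ) + m ≠ 0 := by positivity
  push_cast
  field_simp

lemma binomTerm_succ_sub {N m s : ℕ} (hm : 1 ≤ m) (h : s + m ≤ N) :
    binomTerm (N + 1) m s - binomTerm N m s = binomCert N m (s + 1) - binomCert N m s := by
  obtain ⟨k, rfl⟩ : ∃ k, N = s + m + k := ⟨N - (s + m), by omega⟩
  simp only [binomCert]
  rw [binomTerm_eq_factorial hm h, binomTerm_eq_factorial hm (by omega : s + m ≤ s + m + k + 1),
    binomTerm_eq_factorial hm (by omega : s + 1 + m ≤ s + m + k + 1),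
    show s + m + k - (s + m) = k by omega,
    show s + m + k + 1 - (s + m) = k + 1 by omega, show s + m + k + 1 - (s + 1 + m) = k by omega,
    show s + m + k + 1 + s + m = (s + m + k + s + m) + 1 by omega,
    show s + m + k + 1 + (s + 1) + m = (s + m + k + s + m) + 1 + 1 by omega,
    show 2 * m - 1 + (s + 1) = (2 * m - 1 + s) + 1 by omega]
  simp only [Nat.factorial_succ]
  have h2m : ((2 * m - 1 : ℕ) : ℚ) = 2 * m - 1 := by
    rw [Nat.cast_sub (by omega)]; push_cast; ring
  have : (s : ℚ) + m ≠ 0 := by positivity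
  have : (s : ℚ) + m + k - m + 1 ≠ 0 := by ring_nf; positivity
  push_cast [h2m, pow_succ]
  field_simp
  ring

lemma binomCert_zero (N m : ℕ) : binomCert N m 0 = 0 := by
  simp [binomCert]

lemma binomCert_sub_add_one {N m : ℕ} (h : m ≤ N) :
    binomCert N m (N - m + 1) = -binomTerm (N + 1) m (N - m + 1) := by
  have : (N : ℚ) - m + 1 ≠ 0 := by
    rw [sub_add_eq_add_sub, sub_ne_zero]; exact_mod_cast (by omega : N + 1 ≠ m)
  rw [binomCert, Nat.cast_add_one, Nat.cast_sub h]
  field_simp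
  ring

lemma sum_binomTerm_succ {N m : ℕ} (hm : 1 ≤ m) (h : m ≤ N) :
    ∑ s ∈ range (N + 1 - m + 1), binomTerm (N + 1) m s =
      ∑ s ∈ range (N - m + 1), binomTerm N m s := by
  have telescope : ∑ s ∈ range (N - m + 1), binomTerm (N + 1) m s =
      ∑ s ∈ range (N - m + 1), (binomTerm N m s + (binomCert N m (s + 1) - binomCert N m s)) :=
    sum_congr rfl fun s hs ↦ by
      rw [← binomTerm_succ_sub hm (by have := mem_range.1 hs; omega)]; ring
  rw [show N + 1 - m + 1 = N - m + 1 + 1 by omega, sum_range_succ, telescope, sum_add_distrib,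
    sum_range_sub, binomCert_zero, binomCert_sub_add_one h]
  ring

lemma binomTerm_self_zero {m : ℕ} (hm : 1 ≤ m) : binomTerm m m 0 = 1 := by
  have : ((2 * m).choose m : ℚ) ≠ 0 := Nat.cast_ne_zero.2 (Nat.choose_pos (by omega)).ne'
  have : (m : ℚ) ≠ 0 := Nat.cast_ne_zero.2 (by omega)
  rw [binomTerm, show m + 0 + m = 2 * m by omega]
  simp only [zero_add, add_zero, choose_self, cast_one, one_div, CharP.cast_eq_zero, pow_zero,
    mul_one]
  field_simp

theorem sum_binomTerm {N m : ℕ} (hm : 1 ≤ m) (h : m ≤ N) :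
    ∑ s ∈ range (N - m + 1), binomTerm N m s = 1 := by
  induction N, h using Nat.le_induction with
  | base => simp [binomTerm_self_zero hm]
  | succ N h ih => rw [sum_binomTerm_succ hm h, ih]

/-- The binomial identity of Lemma 5.2 (used in the deduction of Zhao's truncated
2-1 formula). -/
theorem binom_identity (N m : ℕ) (h1 : 1 ≤ m) (h2 : m ≤ N) :
    ∑ s ∈ Finset.range (N - m + 1),
      ((N.choose (s + m) : ℚ) / ((N + s + m).choose (s + m) : ℚ)) *
        ((m : ℚ) / ((s : ℚ) + (m : ℚ))) * (-1 : ℚ) ^ s *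
        (((2 * m).choose m : ℚ)) * (((2 * m - 1 + s).choose (2 * m - 1) : ℚ)) = 1 :=
  sum_binomTerm h1 h2
end

section
/- For every real y with 0 ≤ y ≤ π/2, ∑_{n=1}^∞ (4·sin²y)^n / ( n² · binom(2n, n) ) = 2y². -/
/-!
For `|y| < π/2` let `F y = ∑_{n ≥ 1} 4ⁿ sin²ⁿ y / (n² C(2n,n))`. Differentiating twice
termwise, the recursion `(n + 1) C(2n+2, n+1) = 2 (2n + 1) C(2n, n)` turns the second
derivative of the `n`-th term into `V (n - 1) y - V n y`, where
`V n y = 4ⁿ⁺¹ sin²ⁿ y / C(2n, n)`, so `F'' = V 0 = 4`. Since `F 0 = F' 0 = 0`, this gives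
`F y = 2 y²`. At `y = π/2` the terms are nonnegative and each is maximal there, so the value of
the series is the limit `π²/2` from the left.
-/

open Real Set Filter Topology

theorem IsOpen.eqOn_mul_sq_div_two_of_hasDerivAt {F G : ℝ → ℝ} {s : Set ℝ} {c : ℝ}
    (hs : IsOpen s) (hs' : IsPreconnected s) (h0 : 0 ∈ s)
    (hF : ∀ t ∈ s, HasDerivAt F (G t) t) (hG : ∀ t ∈ s, HasDerivAt G c t)
    (hF0 : F 0 = 0) (hG0 : G 0 = 0) :
    EqOn F (fun t => c * t ^ 2 / 2) s := by
  have hGc : EqOn G (fun t => c * t) s :=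
    hs.eqOn_of_deriv_eq hs' (fun t ht => (hG t ht).differentiableAt.differentiableWithinAt)
      (by fun_prop) (fun t ht => by simp [(hG t ht).deriv]) h0 (by simp [hG0])
  refine hs.eqOn_of_deriv_eq hs' (fun t ht => (hF t ht).differentiableAt.differentiableWithinAt)
    (by fun_prop) (fun t ht => ?_) h0 (by simp [hF0])
  rw [(hF t ht).deriv, hGc ht]
  have := ((hasDerivAt_pow 2 t).const_mul c).div_const 2
  rw [this.deriv]
  ring

theorem hasSum_of_tendsto_nhdsLT {φ : ℕ → ℝ → ℝ} {F : ℝ → ℝ} {a L : ℝ}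
    (hφ : ∀ k, ContinuousWithinAt (φ k) (Iio a) a) (hφ0 : ∀ k y, 0 ≤ φ k y)
    (hφa : ∀ k y, φ k y ≤ φ k a) (hsum : ∀ᶠ y in 𝓝[<] a, HasSum (φ · y) (F y))
    (hF : Tendsto F (𝓝[<] a) (𝓝 L)) :
    HasSum (φ · a) L := by
  have hpartial (n : ℕ) : ∑ k ∈ Finset.range n, φ k a ≤ L :=
    le_of_tendsto_of_tendsto (tendsto_finsetSum _ fun k _ => hφ k) hF
      (hsum.mono fun y hy => sum_le_hasSum _ (fun k _ => hφ0 k y) hy)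
  have hs : Summable (φ · a) := summable_of_sum_range_le (hφ0 · a) hpartial
  refine hs.hasSum_iff.2 (le_antisymm (Real.tsum_le_of_sum_range_le (hφ0 · a) hpartial) ?_)
  exact le_of_tendsto hF (hsum.mono fun y hy => hasSum_le (hφa · y) hy hs.hasSum)

namespace CentralBinomSinSeries

noncomputable def fourPowDivCentralBinom (n : ℕ) : ℝ := 4 ^ n / n.centralBinom

lemma fourPowDivCentralBinom_nonneg (n : ℕ) : 0 ≤ fourPowDivCentralBinom n := by
  unfold fourPowDivCentralBinom; positivity

lemma fourPowDivCentralBinom_succ (n : ℕ) :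
    fourPowDivCentralBinom (n + 1) * (2 * n + 1) = 2 * (n + 1) * fourPowDivCentralBinom n := by
  have hrec : ((n : ℝ) + 1) * (n + 1).centralBinom = 2 * (2 * n + 1) * n.centralBinom := by
    exact_mod_cast Nat.succ_mul_centralBinom_succ n
  have hne : ((n + 1).centralBinom : ℝ) ≠ 0 := by exact_mod_cast Nat.centralBinom_ne_zero _
  have hne' : (n.centralBinom : ℝ) ≠ 0 := by exact_mod_cast Nat.centralBinom_ne_zero _
  unfold fourPowDivCentralBinom
  field_simp
  rw [pow_succ]
  linear_combination (-2 * 4 ^ n : ℝ) * hrec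

lemma fourPowDivCentralBinom_succ_le (n : ℕ) :
    fourPowDivCentralBinom (n + 1) ≤ 2 * (n + 1) := by
  have h : (4 : ℝ) ^ (n + 1) ≤ 2 * (n + 1 : ℕ) * (n + 1).centralBinom := by
    exact_mod_cast Nat.four_pow_le_two_mul_self_mul_centralBinom (n + 1) n.succ_pos
  have hpos : (0 : ℝ) < (n + 1).centralBinom := by exact_mod_cast Nat.centralBinom_pos _
  rw [fourPowDivCentralBinom, div_le_iff₀ hpos]
  exact_mod_cast h

lemma fourPowDivCentralBinom_le (n : ℕ) : fourPowDivCentralBinom n ≤ 2 * (n + 1) := by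
  have h := fourPowDivCentralBinom_succ n
  have := fourPowDivCentralBinom_nonneg n
  nlinarith [fourPowDivCentralBinom_succ_le n]

-- `sinTerm k` is the term of index `n = k + 1` of the series.
noncomputable def sinTerm (k : ℕ) (y : ℝ) : ℝ :=
  fourPowDivCentralBinom (k + 1) / (k + 1) ^ 2 * sin y ^ (2 * k + 2)

noncomputable def sinTermDeriv (k : ℕ) (y : ℝ) : ℝ :=
  2 * fourPowDivCentralBinom (k + 1) / (k + 1) * (sin y ^ (2 * k + 1) * cos y)

noncomputable def telescopeTerm (k : ℕ) (y : ℝ) : ℝ :=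
  4 * fourPowDivCentralBinom k * sin y ^ (2 * k)

lemma hasDerivAt_sinTerm (k : ℕ) (y : ℝ) : HasDerivAt (sinTerm k) (sinTermDeriv k y) y := by
  have h : HasDerivAt (sinTerm k) _ y := ((hasDerivAt_sin y).pow (2 * k + 2)).const_mul
    (fourPowDivCentralBinom (k + 1) / (k + 1) ^ 2)
  refine h.congr_deriv ?_
  rw [sinTermDeriv, show 2 * k + 2 - 1 = 2 * k + 1 by omega]
  field_simp
  push_cast
  ring

lemma hasDerivAt_sinTermDeriv (k : ℕ) (y : ℝ) :
    HasDerivAt (sinTermDeriv k) (telescopeTerm k y - telescopeTerm (k + 1) y) y := by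
  have h : HasDerivAt (sinTermDeriv k) _ y :=
    (((hasDerivAt_sin y).pow (2 * k + 1)).mul (hasDerivAt_cos y)).const_mul
      (2 * fourPowDivCentralBinom (k + 1) / (k + 1))
  refine h.congr_deriv ?_
  have hrec := fourPowDivCentralBinom_succ k
  simp only [telescopeTerm, Nat.add_sub_cancel, Pi.pow_apply]
  field_simp
  push_cast
  linear_combination
    (2 * fourPowDivCentralBinom (k + 1) * (2 * k + 1) * sin y ^ (2 * k)) * cos_sq' y
      + 2 * sin y ^ (2 * k) * hrec

lemma sin_sq_pow_succ_le (k : ℕ) (t : ℝ) : (sin t ^ 2) ^ (k + 1) ≤ (sin t ^ 2) ^ k :=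
  pow_le_pow_of_le_one (sq_nonneg _) (sin_sq_le_one t) k.le_succ

lemma abs_sinTerm_le (k : ℕ) (t : ℝ) : |sinTerm k t| ≤ 2 * (sin t ^ 2) ^ k := by
  have hcoeff : fourPowDivCentralBinom (k + 1) / (k + 1) ^ 2 ≤ 2 := by
    rw [div_le_iff₀ (by positivity)]
    nlinarith [fourPowDivCentralBinom_succ_le k]
  have hnonneg := fourPowDivCentralBinom_nonneg (k + 1)
  rw [sinTerm, show 2 * k + 2 = 2 * (k + 1) by ring, pow_mul, abs_of_nonneg (by positivity)]
  exact mul_le_mul hcoeff (sin_sq_pow_succ_le k t) (by positivity) zero_le_two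

lemma abs_sinTermDeriv_le (k : ℕ) (t : ℝ) : |sinTermDeriv k t| ≤ 4 * (sin t ^ 2) ^ k := by
  have hcoeff : 2 * fourPowDivCentralBinom (k + 1) / (k + 1) ≤ 4 := by
    rw [div_le_iff₀ (by positivity)]
    linarith [fourPowDivCentralBinom_succ_le k]
  have hnonneg := fourPowDivCentralBinom_nonneg (k + 1)
  have hpow : |sin t ^ (2 * k + 1) * cos t| ≤ (sin t ^ 2) ^ k := by
    rw [abs_mul, abs_pow, pow_succ, pow_mul, sq_abs]
    calc (sin t ^ 2) ^ k * |sin t| * |cos t| ≤ (sin t ^ 2) ^ k * 1 * 1 := by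
          gcongr
          exacts [abs_sin_le_one t, abs_cos_le_one t]
      _ = (sin t ^ 2) ^ k := by ring
  rw [sinTermDeriv, abs_mul, abs_of_nonneg (by positivity)]
  exact mul_le_mul hcoeff hpow (abs_nonneg _) zero_le_four

lemma abs_telescopeTerm_le (k : ℕ) (t : ℝ) :
    |telescopeTerm k t| ≤ 8 * (k + 1) * (sin t ^ 2) ^ k := by
  have hnonneg := fourPowDivCentralBinom_nonneg k
  rw [telescopeTerm, pow_mul, abs_of_nonneg (by positivity)]
  exact mul_le_mul_of_nonneg_right (by linarith [fourPowDivCentralBinom_le k]) (by positivity)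

lemma abs_telescopeTerm_sub_le (k : ℕ) (t : ℝ) :
    |telescopeTerm k t - telescopeTerm (k + 1) t| ≤ 24 * (k + 1) * (sin t ^ 2) ^ k := by
  have hσ := sin_sq_pow_succ_le k t
  have hσ0 : 0 ≤ (sin t ^ 2) ^ (k + 1) := by positivity
  calc |telescopeTerm k t - telescopeTerm (k + 1) t|
      ≤ |telescopeTerm k t| + |telescopeTerm (k + 1) t| := abs_sub _ _
    _ ≤ 8 * (k + 1) * (sin t ^ 2) ^ k + 8 * (k + 1 + 1) * (sin t ^ 2) ^ (k + 1) := by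
        have := abs_telescopeTerm_le (k + 1) t
        push_cast at this
        gcongr
        exact abs_telescopeTerm_le k t
    _ ≤ 24 * (k + 1) * (sin t ^ 2) ^ k := by nlinarith

lemma sinTerm_nonneg (k : ℕ) (t : ℝ) : 0 ≤ sinTerm k t := by
  have := fourPowDivCentralBinom_nonneg (k + 1)
  rw [sinTerm, show 2 * k + 2 = 2 * (k + 1) by ring, pow_mul]
  positivity

lemma sinTerm_le_sinTerm_pi_div_two (k : ℕ) (t : ℝ) : sinTerm k t ≤ sinTerm k (π / 2) := by
  have := fourPowDivCentralBinom_nonneg (k + 1)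
  rw [sinTerm, sinTerm, sin_pi_div_two, one_pow, show 2 * k + 2 = 2 * (k + 1) by ring, pow_mul]
  exact mul_le_mul_of_nonneg_left (pow_le_one₀ (sq_nonneg _) (sin_sq_le_one t)) (by positivity)

lemma sin_sq_le_sin_sq_of_abs_le {t b : ℝ} (h : |t| ≤ b) (hb : b ≤ π / 2) :
    sin t ^ 2 ≤ sin b ^ 2 := by
  have hcos : cos b ≤ cos t := by
    rw [← cos_abs t]
    exact cos_le_cos_of_nonneg_of_le_pi (abs_nonneg t) (by linarith [pi_pos]) h
  have hcos0 : 0 ≤ cos b :=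
    cos_nonneg_of_neg_pi_div_two_le_of_le (by linarith [abs_nonneg t, pi_pos]) hb
  nlinarith [sin_sq_add_cos_sq t, sin_sq_add_cos_sq b]

lemma sin_sq_lt_one_of_abs_lt {t : ℝ} (h : |t| < π / 2) : sin t ^ 2 < 1 := by
  have := cos_pos_of_mem_Ioo (abs_lt.1 h)
  nlinarith [sin_sq_add_cos_sq t]

lemma summable_mul_succ_mul_sin_sq_pow (C : ℝ) {t : ℝ} (h : |t| < π / 2) :
    Summable fun k : ℕ => C * (k + 1) * (sin t ^ 2) ^ k := by
  have hσ : ‖sin t ^ 2‖ < 1 := by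
    rw [Real.norm_of_nonneg (sq_nonneg _)]; exact sin_sq_lt_one_of_abs_lt h
  exact (((summable_pow_mul_geometric_of_norm_lt_one 1 hσ).add
    (summable_geometric_of_norm_lt_one hσ)).mul_left C).congr fun k => by ring

lemma hasDerivAt_tsum_of_abs_le_sin_sq_pow {g g' : ℕ → ℝ → ℝ} {C t : ℝ}
    (hg : ∀ k t, HasDerivAt (g k) (g' k t) t)
    (hg' : ∀ k t, |g' k t| ≤ C * (k + 1) * (sin t ^ 2) ^ k)
    (hg0 : ∀ k, g k 0 = 0) (ht : |t| < π / 2) :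
    HasDerivAt (fun z => ∑' k, g k z) (∑' k, g' k t) t := by
  -- on `(-b, b)` the bound is uniform, with ratio `sin² b < 1`
  set b := (|t| + π / 2) / 2 with hb_def
  have hb : |b| < π / 2 := by rw [abs_of_nonneg (by positivity)]; linarith
  have htb : t ∈ Ioo (-b) b := abs_lt.1 (by linarith)
  have hC : 0 ≤ C := by simpa using (abs_nonneg _).trans (hg' 0 0)
  refine hasDerivAt_tsum_of_isPreconnected (summable_mul_succ_mul_sin_sq_pow C hb) isOpen_Ioo
    isPreconnected_Ioo (fun k z _ => hg k z) (fun k z hz => ?_) (y₀ := 0)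
    ⟨by linarith [htb.1, htb.2], by linarith [htb.1, htb.2]⟩ (by simp [hg0]) htb
  calc ‖g' k z‖ ≤ C * (k + 1) * (sin z ^ 2) ^ k := hg' k z
    _ ≤ C * (k + 1) * (sin b ^ 2) ^ k := by
      refine mul_le_mul_of_nonneg_left (pow_le_pow_left₀ (sq_nonneg _) ?_ k) (by positivity)
      exact sin_sq_le_sin_sq_of_abs_le (abs_le.2 ⟨hz.1.le, hz.2.le⟩)
        ((le_abs_self b).trans hb.le)

noncomputable def sinSeries (y : ℝ) : ℝ := ∑' k, sinTerm k y

noncomputable def sinSeriesDeriv (y : ℝ) : ℝ := ∑' k, sinTermDeriv k y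

lemma summable_sinTerm {t : ℝ} (ht : |t| < π / 2) : Summable (sinTerm · t) :=
  .of_norm_bounded ((summable_geometric_of_lt_one (sq_nonneg _)
    (sin_sq_lt_one_of_abs_lt ht)).mul_left 2) (abs_sinTerm_le · t)

lemma hasSum_telescopeTerm_sub {t : ℝ} (ht : |t| < π / 2) :
    HasSum (fun k => telescopeTerm k t - telescopeTerm (k + 1) t) 4 := by
  have hsum : Summable fun k => telescopeTerm k t - telescopeTerm (k + 1) t :=
    (summable_mul_succ_mul_sin_sq_pow 24 ht).of_norm_bounded (abs_telescopeTerm_sub_le · t)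
  have hlim : Tendsto (telescopeTerm · t) atTop (𝓝 0) :=
    squeeze_zero_norm (abs_telescopeTerm_le · t)
      (summable_mul_succ_mul_sin_sq_pow 8 ht).tendsto_atTop_zero
  rw [hsum.hasSum_iff_tendsto_nat]
  simp_rw [Finset.sum_range_sub' (telescopeTerm · t)]
  simpa [telescopeTerm, fourPowDivCentralBinom] using hlim.const_sub (telescopeTerm 0 t)

lemma hasDerivAt_sinSeries {t : ℝ} (ht : |t| < π / 2) :
    HasDerivAt sinSeries (sinSeriesDeriv t) t :=
  hasDerivAt_tsum_of_abs_le_sin_sq_pow (C := 4) hasDerivAt_sinTerm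
    (fun k t => (abs_sinTermDeriv_le k t).trans (by gcongr; linarith [k.cast_nonneg (α := ℝ)]))
    (by simp [sinTerm]) ht

lemma hasDerivAt_sinSeriesDeriv {t : ℝ} (ht : |t| < π / 2) :
    HasDerivAt sinSeriesDeriv 4 t := by
  rw [← (hasSum_telescopeTerm_sub ht).tsum_eq]
  exact hasDerivAt_tsum_of_abs_le_sin_sq_pow hasDerivAt_sinTermDeriv abs_telescopeTerm_sub_le
    (by simp [sinTermDeriv]) ht

lemma hasSum_sinTerm {t : ℝ} (ht : |t| < π / 2) : HasSum (sinTerm · t) (2 * t ^ 2) := by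
  have hF := isOpen_Ioo.eqOn_mul_sq_div_two_of_hasDerivAt isPreconnected_Ioo
    (by simp [pi_pos]) (fun t ht => hasDerivAt_sinSeries (abs_lt.2 ht))
    (fun t ht => hasDerivAt_sinSeriesDeriv (abs_lt.2 ht))
    (by simp [sinSeries, sinTerm]) (by simp [sinSeriesDeriv, sinTermDeriv]) (abs_lt.1 ht)
  refine (summable_sinTerm ht).hasSum_iff.2 ?_
  rw [← sinSeries, hF]
  ring

lemma hasSum_sinTerm_pi_div_two : HasSum (sinTerm · (π / 2)) (2 * (π / 2) ^ 2) := by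
  refine hasSum_of_tendsto_nhdsLT (F := fun t => 2 * t ^ 2)
    (fun k => (hasDerivAt_sinTerm k _).continuousAt.continuousWithinAt) sinTerm_nonneg
    sinTerm_le_sinTerm_pi_div_two ?_ ?_
  · filter_upwards [Ioo_mem_nhdsLT (neg_lt_self (half_pos pi_pos))] with t ht
    exact hasSum_sinTerm (abs_lt.2 ht)
  · exact (Continuous.tendsto (by fun_prop) _).mono_left nhdsWithin_le_nhds

lemma four_mul_sin_sq_pow_div_eq_sinTerm (k : ℕ) (y : ℝ) :
    (4 * sin y ^ 2) ^ (k + 1) / (((k + 1 : ℕ) : ℝ) ^ 2 * ((2 * (k + 1)).choose (k + 1) : ℝ)) =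
      sinTerm k y := by
  rw [sinTerm, fourPowDivCentralBinom, Nat.centralBinom_eq_two_mul_choose, mul_pow, ← pow_mul]
  push_cast
  field_simp
  ring

end CentralBinomSinSeries

open CentralBinomSinSeries

/-- ∑_{n≥1} (4 sin²y)^n / (n² C(2n,n)) = 2y² for 0 ≤ y ≤ π/2. -/
theorem central_binom_sin_sum (y : ℝ) (h0 : 0 ≤ y) (h1 : y ≤ Real.pi / 2) :
    ∑' n : ℕ+, (4 * Real.sin y ^ 2) ^ (n : ℕ) /
      (((n : ℕ) : ℝ) ^ 2 * ((2 * (n : ℕ)).choose (n : ℕ) : ℝ)) = 2 * y ^ 2 := by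
  have hsum : HasSum (sinTerm · y) (2 * y ^ 2) := by
    rcases h1.lt_or_eq with hlt | rfl
    · exact hasSum_sinTerm (by rwa [abs_of_nonneg h0])
    · exact hasSum_sinTerm_pi_div_two
  rw [tsum_pnat_eq_tsum_succ
    (f := fun n : ℕ => (4 * sin y ^ 2) ^ n / ((n : ℝ) ^ 2 * ((2 * n).choose n : ℝ)))]
  simp_rw [four_mul_sin_sq_pow_div_eq_sinTerm]
  exact hsum.tsum_eq
end
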